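/- arXiv:1402.0008 — 2 statements merged into one kernel-verified Lean document; each statement's English description precedes it below -/
import Mathlib

section
/- Energy conservation of Scheme-2 (Theorem 2.1, case Scheme-2). Suppose f^n, f^{n+1/2}, f^{n+1} are phase-space functions and E^n, E^{n+1}, B^n, B^{n+1} are spatial vector fields satisfying the semi-discrete relations: (f^{n+1/2} − f^n)/(Δt/2) + v·∇_x f^n + (E^n + v×B^n)·∇_v f^n = 0; (B^{n+1} − B^n)/Δt = −∇×((E^n + E^{n+1})/2); (E^{n+1} − E^n)/Δt = ∇×((B^n + B^{n+1})/2) − J^{n+1/2}, where J^{n+1/2}(x) = ∫_Ωv f^{n+1/2}(x,v) v dv; and (f^{n+1} − f^n)/Δt + v·∇_x f^{n+1/2} + ((E^n + E^{n+1})/2 + v×(B^n + B^{n+1})/2)·∇_v f^{n+1/2} = 0. Then the discrete total energy is conserved: ∫_Ωx ∫_Ωv f^{n+1} |v|² dv dx + ∫_Ωx (|E^{n+1}|² + |B^{n+1}|²) dx = ∫_Ωx ∫_Ωv f^n |v|² dv dx + ∫_Ωx (|E^n|² + |B^n|²) dx. -/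
open MeasureTheory Matrix

noncomputable section

/-- Points of `ℝ³`. -/
abbrev V3 : Type := Fin 3 → ℝ

/-- Partial derivative in the `i`-th coordinate direction. -/
def pd (i : Fin 3) (g : V3 → ℝ) (x : V3) : ℝ := fderiv ℝ g x (Pi.single i 1)

/-- Curl of a vector field on `ℝ³`. -/
def curl (U : V3 → V3) (x : V3) : V3 :=
  ![pd 1 (fun y => U y 2) x - pd 2 (fun y => U y 1) x,
    pd 2 (fun y => U y 0) x - pd 0 (fun y => U y 2) x,
    pd 0 (fun y => U y 1) x - pd 1 (fun y => U y 0) x]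

/-- Gradient in the `x`-variable of a phase-space function. -/
def gradX (f : V3 → V3 → ℝ) (x v : V3) : V3 :=
  fun i => fderiv ℝ (fun y => f y v) x (Pi.single i 1)

/-- Gradient in the `v`-variable of a phase-space function. -/
def gradV (f : V3 → V3 → ℝ) (x v : V3) : V3 :=
  fun i => fderiv ℝ (fun w => f x w) v (Pi.single i 1)

/-- The period box `[0,L]³`. -/
def box (L : ℝ) : Set V3 := Set.Icc 0 (fun _ => L)

/-- A spatial vector field: smooth and `L`-periodic. -/
def IsSpatialVF (L : ℝ) (U : V3 → V3) : Prop :=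
  ContDiff ℝ (⊤ : ℕ∞) U ∧ ∀ (x : V3) (i : Fin 3), U (x + L • (Pi.single i (1:ℝ) : V3)) = U x

/-- A phase-space function: smooth, `L`-periodic in `x`, compactly supported in `v`
(uniformly in `x`). -/
def IsPhase (L : ℝ) (f : V3 → V3 → ℝ) : Prop :=
  ContDiff ℝ (⊤ : ℕ∞) (fun p : V3 × V3 => f p.1 p.2) ∧
  (∀ (x v : V3) (i : Fin 3), f (x + L • (Pi.single i (1:ℝ) : V3)) v = f x v) ∧
  ∃ R : ℝ, ∀ (x v : V3), R ≤ ‖v‖ → f x v = 0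

/-- Current density `J(x) = ∫ f(x,v) v dv`. -/
def Jcur (f : V3 → V3 → ℝ) (x : V3) : V3 := ∫ v : V3, f x v • v

/-- Kinetic energy `∫_Ωx ∫_Ωv f |v|² dv dx`. -/
def kinE (L : ℝ) (f : V3 → V3 → ℝ) : ℝ :=
  ∫ x in box L, ∫ v : V3, f x v * (v ⬝ᵥ v)

/-- Field energy `∫_Ωx |U|² dx`. -/
def fieldE (L : ℝ) (U : V3 → V3) : ℝ := ∫ x in box L, U x ⬝ᵥ U x

lemma pd_add {f g : V3 → ℝ} {x : V3} (i : Fin 3) (hf : DifferentiableAt ℝ f x)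
    (hg : DifferentiableAt ℝ g x) :
    pd i (fun y => f y + g y) x = pd i f x + pd i g x := by
  simp [pd, fderiv_fun_add hf hg]

lemma pd_mul {f g : V3 → ℝ} {x : V3} (i : Fin 3) (hf : DifferentiableAt ℝ f x)
    (hg : DifferentiableAt ℝ g x) :
    pd i (fun y => f y * g y) x = pd i f x * g x + f x * pd i g x := by
  simp [pd, fderiv_fun_mul hf hg]; ring

lemma pd_const (i : Fin 3) (c : ℝ) (x : V3) : pd i (fun _ => c) x = 0 := by
  simp [pd]

lemma pd_const_mul {g : V3 → ℝ} {x : V3} (i : Fin 3) (c : ℝ) (hg : DifferentiableAt ℝ g x) :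
    pd i (fun y => c * g y) x = c * pd i g x := by
  simp [pd, fderiv_const_mul hg]

lemma differentiableAt_coord (j : Fin 3) (x : V3) :
    DifferentiableAt ℝ (fun v : V3 => v j) x :=
  (ContinuousLinearMap.proj j : V3 →L[ℝ] ℝ).differentiableAt

lemma pd_coord (i j : Fin 3) (x : V3) :
    pd i (fun v : V3 => v j) x = (Pi.single i (1:ℝ) : V3) j := by
  have : (fun v : V3 => v j) = (ContinuousLinearMap.proj j : V3 →L[ℝ] ℝ) := rfl
  rw [pd, this, ContinuousLinearMap.fderiv]
  rfl

lemma pd_coord_self (i : Fin 3) (x : V3) : pd i (fun v : V3 => v i) x = 1 := by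
  simp [pd_coord]

lemma pd_coord_ne {i j : Fin 3} (h : j ≠ i) (x : V3) :
    pd i (fun v : V3 => v j) x = 0 := by
  simp [pd_coord, Pi.single_eq_of_ne h]

section grad

variable {f : V3 → V3 → ℝ}

lemma hasFDerivAt_pfst (hf : ContDiff ℝ (⊤ : ℕ∞) (fun p : V3 × V3 => f p.1 p.2)) (x v : V3) :
    HasFDerivAt (fun y => f y v)
      ((fderiv ℝ (fun p : V3 × V3 => f p.1 p.2) (x, v)).comp
        (ContinuousLinearMap.inl ℝ V3 V3)) x :=
  by have h := ((hf.differentiable (by simp) (x, v)).hasFDerivAt).comp x (hasFDerivAt_prodMk_left (𝕜 := ℝ) x v); exact h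

lemma hasFDerivAt_psnd (hf : ContDiff ℝ (⊤ : ℕ∞) (fun p : V3 × V3 => f p.1 p.2)) (x v : V3) :
    HasFDerivAt (fun w => f x w)
      ((fderiv ℝ (fun p : V3 × V3 => f p.1 p.2) (x, v)).comp
        (ContinuousLinearMap.inr ℝ V3 V3)) v :=
  ((hf.differentiable (by simp) (x, v)).hasFDerivAt).comp v (hasFDerivAt_prodMk_right x v)

lemma gradX_eq (hf : ContDiff ℝ (⊤ : ℕ∞) (fun p : V3 × V3 => f p.1 p.2)) (x v : V3) (i : Fin 3) :
    gradX f x v i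
      = fderiv ℝ (fun p : V3 × V3 => f p.1 p.2) (x, v) (Pi.single i 1, 0) := by
  rw [gradX, (hasFDerivAt_pfst hf x v).fderiv]; rfl

lemma gradV_eq (hf : ContDiff ℝ (⊤ : ℕ∞) (fun p : V3 × V3 => f p.1 p.2)) (x v : V3) (i : Fin 3) :
    gradV f x v i
      = fderiv ℝ (fun p : V3 × V3 => f p.1 p.2) (x, v) (0, Pi.single i 1) := by
  rw [gradV, (hasFDerivAt_psnd hf x v).fderiv]; rfl

lemma continuous_gradX (hf : ContDiff ℝ (⊤ : ℕ∞) (fun p : V3 × V3 => f p.1 p.2)) (i : Fin 3) :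
    Continuous (fun p : V3 × V3 => gradX f p.1 p.2 i) := by
  have : (fun p : V3 × V3 => gradX f p.1 p.2 i)
      = fun p : V3 × V3 => fderiv ℝ (fun p : V3 × V3 => f p.1 p.2) p (Pi.single i 1, 0) := by
    funext p; exact gradX_eq hf p.1 p.2 i
  rw [this]
  exact (hf.continuous_fderiv (by simp)).clm_apply continuous_const

lemma continuous_gradV (hf : ContDiff ℝ (⊤ : ℕ∞) (fun p : V3 × V3 => f p.1 p.2)) (i : Fin 3) :
    Continuous (fun p : V3 × V3 => gradV f p.1 p.2 i) := by
  have : (fun p : V3 × V3 => gradV f p.1 p.2 i)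
      = fun p : V3 × V3 => fderiv ℝ (fun p : V3 × V3 => f p.1 p.2) p (0, Pi.single i 1) := by
    funext p; exact gradV_eq hf p.1 p.2 i
  rw [this]
  exact (hf.continuous_fderiv (by simp)).clm_apply continuous_const

lemma contDiff_pfst (hf : ContDiff ℝ (⊤ : ℕ∞) (fun p : V3 × V3 => f p.1 p.2)) (v : V3) :
    ContDiff ℝ (⊤ : ℕ∞) (fun y => f y v) :=
  hf.comp (contDiff_id.prodMk contDiff_const)

lemma contDiff_psnd (hf : ContDiff ℝ (⊤ : ℕ∞) (fun p : V3 × V3 => f p.1 p.2)) (x : V3) :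
    ContDiff ℝ (⊤ : ℕ∞) (fun w => f x w) :=
  hf.comp (contDiff_const.prodMk contDiff_id)

/-- x-gradient vanishes where `f (·, v)` is identically zero. -/
lemma gradX_zero_of_zero (hv : ∀ y : V3, f y v = 0) (x : V3) (i : Fin 3) :
    gradX f x v i = 0 := by
  have : (fun y => f y v) = fun _ : V3 => (0:ℝ) := funext hv
  simp [gradX, this]

/-- v-gradient vanishes on a neighborhood where `f x ·` vanishes. -/
lemma gradV_zero_of_zero {R : ℝ} (hsupp : ∀ w : V3, R ≤ ‖w‖ → f x w = 0)
    {v : V3} (hv : R < ‖v‖) (i : Fin 3) : gradV f x v i = 0 := by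
  have hev : (fun w => f x w) =ᶠ[nhds v] (fun _ => (0:ℝ)) := by
    have hopen : IsOpen {w : V3 | R < ‖w‖} := isOpen_lt continuous_const continuous_norm
    filter_upwards [hopen.mem_nhds hv] with w hw
    exact hsupp w (le_of_lt hw)
  rw [gradV, hev.fderiv_eq, fderiv_const_apply]
  rfl

end grad

lemma isCompact_box (L : ℝ) : IsCompact (box L) := isCompact_Icc

lemma measurableSet_box (L : ℝ) : MeasurableSet (box L) := measurableSet_Icc

section divergence

/-- vanishing of `pd` on an open region where the function vanishes -/
lemma pd_zero_of_zero_nhds {g : V3 → ℝ} {R : ℝ} (h : ∀ w : V3, R ≤ ‖w‖ → g w = 0)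
    {v : V3} (hv : R < ‖v‖) (i : Fin 3) : pd i g v = 0 := by
  have hev : g =ᶠ[nhds v] (fun _ => (0:ℝ)) := by
    have hopen : IsOpen {w : V3 | R < ‖w‖} := isOpen_lt continuous_const continuous_norm
    filter_upwards [hopen.mem_nhds hv] with w hw
    exact h w (le_of_lt hw)
  rw [pd, hev.fderiv_eq, fderiv_const_apply]
  rfl

lemma div_box (a b : V3) (hab : a ≤ b) (U : Fin 3 → V3 → ℝ) (hU : ∀ i, ContDiff ℝ (⊤ : ℕ∞) (U i)) :
    ∫ x in Set.Icc a b, ∑ i : Fin 3, pd i (U i) x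
      = ∑ i : Fin 3,
          ((∫ y in Set.Icc (a ∘ i.succAbove) (b ∘ i.succAbove), U i (i.insertNth (b i) y))
           - ∫ y in Set.Icc (a ∘ i.succAbove) (b ∘ i.succAbove), U i (i.insertNth (a i) y)) := by
  exact MeasureTheory.integral_divergence_of_hasFDerivAt_off_countable' (E := ℝ) (n := 2)
    a b hab (fun i => U i) (fun i x => fderiv ℝ (U i) x) ∅ Set.countable_empty
    (fun i => ((hU i).continuous).continuousOn)
    (fun x _ i => ((hU i).differentiable (by simp) x).hasFDerivAt)
    ((Continuous.continuousOn (continuous_finset_sum _ (fun i _ =>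
      (((hU i).continuous_fderiv (by simp)).clm_apply continuous_const)))).integrableOn_compact
      isCompact_Icc)

lemma div_periodic_zero {L : ℝ} (hL : 0 < L) (U : Fin 3 → V3 → ℝ)
    (hU : ∀ i, ContDiff ℝ (⊤ : ℕ∞) (U i))
    (hper : ∀ (i : Fin 3) (x : V3), U i (x + L • (Pi.single i (1:ℝ) : V3)) = U i x) :
    ∫ x in box L, ∑ i : Fin 3, pd i (U i) x = 0 := by
  have hab : (0 : V3) ≤ (fun _ => L) := fun _ => hL.le
  rw [box, div_box 0 (fun _ => L) hab U hU]
  apply Finset.sum_eq_zero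
  intro i _
  have key : ∀ y : Fin 2 → ℝ,
      i.insertNth ((fun _ : Fin 3 => L) i) y
        = i.insertNth ((0 : V3) i) y + L • (Pi.single i (1:ℝ) : V3) := by
    intro y
    funext j
    refine Fin.succAboveCases i ?_ (fun j' => ?_) j
    · simp [Fin.insertNth_apply_same, Pi.smul_apply]
    · simp [Fin.insertNth_apply_succAbove, Pi.smul_apply,
        Pi.single_eq_of_ne (Fin.succAbove_ne i j')]
  have : (fun y : Fin 2 → ℝ => U i (i.insertNth ((fun _ : Fin 3 => L) i) y))
      = fun y => U i (i.insertNth ((0 : V3) i) y) := by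
    funext y
    rw [key y, hper i]
  simp only [this, sub_self]

lemma div_compact_zero (U : Fin 3 → V3 → ℝ) (hU : ∀ i, ContDiff ℝ (⊤ : ℕ∞) (U i)) (R : ℝ)
    (hsupp : ∀ (i : Fin 3) (v : V3), R ≤ ‖v‖ → U i v = 0) :
    ∫ v : V3, ∑ i : Fin 3, pd i (U i) v = 0 := by
  set M : ℝ := |R| + 1 with hM
  have hRM : R < M := lt_of_le_of_lt (le_abs_self R) (by simp [hM])
  have hM0 : 0 < M := lt_of_le_of_lt (abs_nonneg R) (by simp [hM])
  have hab : (fun _ : Fin 3 => -M) ≤ (fun _ : Fin 3 => M) := fun _ => by show -M ≤ M; linarith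
  have hout : ∀ v : V3, v ∉ Set.Icc (fun _ : Fin 3 => -M) (fun _ => M) →
      (∑ i : Fin 3, pd i (U i) v) = 0 := by
    intro v hv
    have : ∃ j, ¬((-M ≤ v j) ∧ (v j ≤ M)) := by
      by_contra hc
      push_neg at hc
      exact hv ⟨fun j => (hc j).1, fun j => (hc j).2⟩
    obtain ⟨j, hj⟩ := this
    have habs : M < |v j| := by
      rcases not_and_or.mp hj with h | h
      · push_neg at h; rw [abs_of_neg (by linarith)]; linarith
      · push_neg at h; rw [abs_of_pos (by linarith)]; linarith
    have hnorm : M < ‖v‖ := lt_of_lt_of_le habs (by simpa [Real.norm_eq_abs] using norm_le_pi_norm v j)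
    exact Finset.sum_eq_zero fun i _ =>
      pd_zero_of_zero_nhds (hsupp i) (lt_trans hRM hnorm) i
  rw [← MeasureTheory.setIntegral_eq_integral_of_forall_compl_eq_zero hout]
  rw [div_box _ _ hab U hU]
  apply Finset.sum_eq_zero
  intro i _
  have hface : ∀ (c : ℝ), |c| = M → ∀ y : Fin 2 → ℝ, U i (i.insertNth c y) = 0 := by
    intro c hc y
    apply hsupp i
    have h1 : |(i.insertNth c y : V3) i| ≤ ‖(i.insertNth c y : V3)‖ := by
      simpa [Real.norm_eq_abs] using norm_le_pi_norm (i.insertNth c y : V3) i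
    rw [Fin.insertNth_apply_same] at h1
    rw [hc] at h1
    linarith
  have h1 : ∀ y : Fin 2 → ℝ, U i (i.insertNth ((fun _ : Fin 3 => M) i) y) = 0 :=
    hface M (abs_of_pos hM0)
  have h2 : ∀ y : Fin 2 → ℝ, U i (i.insertNth ((fun _ : Fin 3 => -M) i) y) = 0 :=
    hface (-M) (by rw [abs_neg]; exact abs_of_pos hM0)
  simp only [h1, h2, integral_zero, sub_self]

end divergence

section integrals

lemma cont_param {f : V3 → V3 → ℝ} (hf : Continuous fun p : V3 × V3 => f p.1 p.2)
    {K : Set V3} (hK : IsCompact K) (hKm : MeasurableSet K) :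
    Continuous fun x => ∫ v in K, f x v := by
  rw [continuous_iff_continuousAt]
  intro x0
  obtain ⟨C, hC⟩ := ((isCompact_closedBall x0 1).prod hK).exists_bound_of_continuousOn
    hf.continuousOn
  apply MeasureTheory.continuousAt_of_dominated (bound := fun _ => C)
  · exact Filter.Eventually.of_forall fun x =>
      (hf.comp (Continuous.prodMk_right x)).aestronglyMeasurable
  · filter_upwards [Metric.closedBall_mem_nhds x0 one_pos] with x hx
    refine (MeasureTheory.ae_restrict_mem hKm).mono fun v hv => ?_
    exact hC (x, v) ⟨hx, hv⟩
  · exact MeasureTheory.integrableOn_const hK.measure_lt_top.ne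
  · exact Filter.Eventually.of_forall fun v =>
      (hf.comp (continuous_id.prodMk continuous_const)).continuousAt

lemma swap_box_K {L : ℝ} {f : V3 → V3 → ℝ} (hf : Continuous fun p : V3 × V3 => f p.1 p.2)
    {K : Set V3} (hK : IsCompact K) :
    ∫ x in box L, ∫ v in K, f x v = ∫ v in K, ∫ x in box L, f x v := by
  apply MeasureTheory.integral_integral_swap
  have h1 : (volume.restrict (box L)).prod (volume.restrict K)
      = (volume.prod volume).restrict ((box L) ×ˢ K) := Measure.prod_restrict _ _
  have h2 : (volume : Measure (V3 × V3)) = volume.prod volume := Measure.volume_eq_prod _ _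
  rw [h1, ← h2]
  exact (hf.continuousOn).integrableOn_compact ((isCompact_box L).prod hK)

lemma integrable_of_vanish {g : V3 → ℝ} (hg : Continuous g) {R : ℝ}
    (hR : ∀ v : V3, R ≤ ‖v‖ → g v = 0) : Integrable g volume := by
  apply hg.integrable_of_hasCompactSupport
  apply HasCompactSupport.intro (isCompact_closedBall (0:V3) |R|)
  intro v hv
  simp only [Metric.mem_closedBall, dist_zero_right, not_le] at hv
  exact hR v (le_trans (le_abs_self R) hv.le)

lemma integrable_smul_vec {f : V3 → ℝ} (hf : Continuous f) {R : ℝ}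
    (hR : ∀ v : V3, R ≤ ‖v‖ → f v = 0) : Integrable (fun v : V3 => f v • v) volume := by
  apply Continuous.integrable_of_hasCompactSupport (hf.smul continuous_id)
  apply HasCompactSupport.intro (isCompact_closedBall (0:V3) |R|)
  intro v hv
  simp only [Metric.mem_closedBall, dist_zero_right, not_le] at hv
  show f v • v = 0
  rw [hR v (le_trans (le_abs_self R) hv.le), zero_smul]

lemma dot_integral (c : V3) {F : V3 → V3} (hF : Integrable F volume) :
    c ⬝ᵥ (∫ v : V3, F v) = ∫ v : V3, c ⬝ᵥ F v := by
  have hcomp : ∀ i : Fin 3, (∫ v : V3, F v) i = ∫ v : V3, F v i := fun i =>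
    ((ContinuousLinearMap.proj i : V3 →L[ℝ] ℝ).integral_comp_comm hF).symm
  have hint : ∀ i : Fin 3, Integrable (fun v : V3 => F v i) volume := fun i =>
    (ContinuousLinearMap.proj i : V3 →L[ℝ] ℝ).integrable_comp hF
  calc c ⬝ᵥ (∫ v : V3, F v) = ∑ i : Fin 3, c i * (∫ v : V3, F v) i := rfl
    _ = ∑ i : Fin 3, ∫ v : V3, c i * F v i := by
        refine Finset.sum_congr rfl fun i _ => ?_
        rw [hcomp i, ← MeasureTheory.integral_const_mul]
    _ = ∫ v : V3, ∑ i : Fin 3, c i * F v i :=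
        (MeasureTheory.integral_finset_sum _ fun i _ => (hint i).const_mul (c i)).symm
    _ = ∫ v : V3, c ⬝ᵥ F v := rfl

end integrals

section pointwise

lemma pd_sub {f g : V3 → ℝ} {x : V3} (i : Fin 3) (hf : DifferentiableAt ℝ f x)
    (hg : DifferentiableAt ℝ g x) :
    pd i (fun y => f y - g y) x = pd i f x - pd i g x := by
  simp [pd, fderiv_fun_sub hf hg]

lemma contDiff_coord (j : Fin 3) : ContDiff ℝ (⊤ : ℕ∞) (fun v : V3 => v j) :=
  (ContinuousLinearMap.proj j : V3 →L[ℝ] ℝ).contDiff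

lemma contDiff_dot : ContDiff ℝ (⊤ : ℕ∞) (fun v : V3 => v ⬝ᵥ v) := by
  have : (fun v : V3 => v ⬝ᵥ v) = fun v : V3 => ∑ j : Fin 3, v j * v j := rfl
  rw [this]
  exact ContDiff.sum fun j _ => (contDiff_coord j).mul (contDiff_coord j)

lemma pd_dot_self (i : Fin 3) (x : V3) : pd i (fun v : V3 => v ⬝ᵥ v) x = 2 * x i := by
  have hrw : (fun v : V3 => v ⬝ᵥ v) = fun v : V3 => v 0 * v 0 + (v 1 * v 1 + v 2 * v 2) := by
    funext v; simp [dotProduct, Fin.sum_univ_three]; ring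
  rw [hrw]
  simp (disch := fun_prop) only [pd_add, pd_mul, pd_coord]
  fin_cases i <;> simp [Pi.single_apply] <;> ring

/-- The key `v`-space divergence identity. -/
lemma vflux_pointwise (c b : V3) {φ : V3 → ℝ} (hφ : Differentiable ℝ φ) (v : V3) :
    ∑ i : Fin 3, pd i (fun w => (c + crossProduct w b) i * (φ w * (w ⬝ᵥ w))) v
      = ((c + crossProduct v b) ⬝ᵥ (fun i => pd i φ v)) * (v ⬝ᵥ v)
        + φ v * (2 * (c ⬝ᵥ v)) := by
  have dot3 : ∀ w : V3, w ⬝ᵥ w = w 0 * w 0 + (w 1 * w 1 + w 2 * w 2) := by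
    intro w; simp [dotProduct, Fin.sum_univ_three]; ring
  rw [Fin.sum_univ_three]
  simp only [cross_apply, Pi.add_apply, Matrix.cons_val_zero,
    Matrix.cons_val_one, Matrix.head_cons, Matrix.cons_val_two, Matrix.tail_cons, dot3]
  simp (disch := fun_prop) only [pd_mul, pd_add, pd_sub, pd_const, pd_coord]
  simp only [dotProduct, Fin.sum_univ_three, Pi.add_apply, Matrix.cons_val_zero,
    Matrix.cons_val_one, Matrix.head_cons, Matrix.cons_val_two, Matrix.tail_cons,
    Pi.single_apply]
  norm_num [Fin.ext_iff]
  ring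

/-- The Poynting divergence identity. -/
lemma poynting_pointwise {E B : V3 → V3}
    (hE : ∀ j, Differentiable ℝ (fun y => E y j))
    (hB : ∀ j, Differentiable ℝ (fun y => B y j)) (x : V3) :
    ∑ i : Fin 3, pd i (fun y => crossProduct (E y) (B y) i) x
      = B x ⬝ᵥ curl E x - E x ⬝ᵥ curl B x := by
  rw [Fin.sum_univ_three]
  simp only [cross_apply, Matrix.cons_val_zero, Matrix.cons_val_one, Matrix.head_cons,
    Matrix.cons_val_two, Matrix.tail_cons]
  simp (disch := fun_prop) only [pd_mul, pd_sub]
  simp only [curl, dotProduct, Fin.sum_univ_three, Matrix.cons_val_zero,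
    Matrix.cons_val_one, Matrix.head_cons, Matrix.cons_val_two, Matrix.tail_cons]
  ring

end pointwise

section helpers

lemma continuous_pd {g : V3 → ℝ} (hg : ContDiff ℝ (⊤ : ℕ∞) g) (i : Fin 3) :
    Continuous fun x => pd i g x := by
  unfold pd
  exact (hg.continuous_fderiv (by simp)).clm_apply continuous_const

lemma continuous_curl_apply {U : V3 → V3} (hU : ContDiff ℝ (⊤ : ℕ∞) U) (i : Fin 3) :
    Continuous fun x => curl U x i := by
  have hj : ∀ j : Fin 3, ContDiff ℝ (⊤ : ℕ∞) (fun y => U y j) := contDiff_pi.mp hU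
  fin_cases i <;> simp only [curl, Matrix.cons_val_zero, Matrix.cons_val_one, Matrix.head_cons,
    Matrix.cons_val_two, Matrix.tail_cons, Fin.isValue] <;>
    exact (continuous_pd (hj _) _).sub (continuous_pd (hj _) _)

lemma continuous_dot {U W : V3 → V3} (hU : Continuous U) (hW : Continuous W) :
    Continuous fun x => U x ⬝ᵥ W x := by
  have : (fun x => U x ⬝ᵥ W x) = fun x => ∑ i : Fin 3, U x i * W x i := rfl
  rw [this]
  exact continuous_finset_sum _ fun i _ =>
    ((continuous_apply i).comp hU).mul ((continuous_apply i).comp hW)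

lemma continuous_curl {U : V3 → V3} (hU : ContDiff ℝ (⊤ : ℕ∞) U) :
    Continuous fun x => curl U x :=
  continuous_pi fun i => continuous_curl_apply hU i

end helpers

section bigsteps

/-- x-space flux of the transport term vanishes by periodicity. -/
lemma xflux {L : ℝ} (hL : 0 < L) {f : V3 → V3 → ℝ} (hf : IsPhase L f) (v : V3) :
    ∫ x in box L, (v ⬝ᵥ gradX f x v) * (v ⬝ᵥ v) = 0 := by
  have hU : ∀ i : Fin 3, ContDiff ℝ (⊤ : ℕ∞) (fun y => (v i * (v ⬝ᵥ v)) * f y v) :=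
    fun i => contDiff_const.mul (contDiff_pfst hf.1 v)
  have hper : ∀ (i : Fin 3) (x : V3),
      (v i * (v ⬝ᵥ v)) * f (x + L • (Pi.single i (1:ℝ) : V3)) v = (v i * (v ⬝ᵥ v)) * f x v := by
    intro i x; rw [hf.2.1]
  have h := div_periodic_zero hL (fun i y => (v i * (v ⬝ᵥ v)) * f y v) hU hper
  have hkey : (fun x => ∑ i : Fin 3, pd i (fun y => (v i * (v ⬝ᵥ v)) * f y v) x)
      = fun x => (v ⬝ᵥ gradX f x v) * (v ⬝ᵥ v) := by
    funext x
    have hd : ∀ y : V3, DifferentiableAt ℝ (fun z => f z v) y :=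
      fun y => ((contDiff_pfst hf.1 v).differentiable (by simp)).differentiableAt
    have hpd : ∀ i : Fin 3, pd i (fun y => (v i * (v ⬝ᵥ v)) * f y v) x
        = (v i * (v ⬝ᵥ v)) * gradX f x v i := fun i => pd_const_mul i _ (hd x)
    simp only [hpd]
    simp [dotProduct, Fin.sum_univ_three]
    ring
  rw [hkey] at h
  exact h

/-- v-space flux identity. -/
lemma vflux (c b : V3) {φ : V3 → ℝ} (hφ : ContDiff ℝ (⊤ : ℕ∞) φ) {R : ℝ}
    (hR : ∀ v : V3, R ≤ ‖v‖ → φ v = 0) :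
    ∫ v : V3, ((c + crossProduct v b) ⬝ᵥ (fun i => pd i φ v)) * (v ⬝ᵥ v)
      = -2 * (c ⬝ᵥ ∫ v : V3, φ v • v) := by
  have hφd : Differentiable ℝ φ := hφ.differentiable (by simp)
  have hcross : ∀ i : Fin 3, ContDiff ℝ (⊤ : ℕ∞) (fun w : V3 => (c + crossProduct w b) i) := by
    intro i
    fin_cases i <;>
      · simp only [Pi.add_apply, cross_apply, Matrix.cons_val_zero, Matrix.cons_val_one,
          Matrix.head_cons, Matrix.cons_val_two, Matrix.tail_cons, Fin.isValue]
        exact contDiff_const.add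
          (((contDiff_coord _).mul contDiff_const).sub ((contDiff_coord _).mul contDiff_const))
  have hU : ∀ i : Fin 3, ContDiff ℝ (⊤ : ℕ∞)
      (fun w : V3 => (c + crossProduct w b) i * (φ w * (w ⬝ᵥ w))) :=
    fun i => (hcross i).mul (hφ.mul contDiff_dot)
  have hzero := div_compact_zero (fun i w => (c + crossProduct w b) i * (φ w * (w ⬝ᵥ w))) hU R
    (fun i v hv => by simp [hR v hv])
  have hkey : (fun v : V3 => ∑ i : Fin 3,
        pd i (fun w => (c + crossProduct w b) i * (φ w * (w ⬝ᵥ w))) v)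
      = fun v => ((c + crossProduct v b) ⬝ᵥ (fun i => pd i φ v)) * (v ⬝ᵥ v)
          + φ v * (2 * (c ⬝ᵥ v)) :=
    funext fun v => vflux_pointwise c b hφd v
  rw [hkey] at hzero
  have hpdz : ∀ v : V3, |R| < ‖v‖ → ∀ i : Fin 3, pd i φ v = 0 := fun v hv i =>
    pd_zero_of_zero_nhds hR (lt_of_le_of_lt (le_abs_self R) hv) i
  have hi1 : Integrable
      (fun v : V3 => ((c + crossProduct v b) ⬝ᵥ (fun i => pd i φ v)) * (v ⬝ᵥ v)) volume := by
    apply integrable_of_vanish (R := |R| + 1)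
    · have hdotc : Continuous fun v : V3 =>
          ((c + crossProduct v b) ⬝ᵥ (fun i => pd i φ v)) :=
        continuous_finset_sum _ fun i _ =>
          ((hcross i).continuous).mul (continuous_pd hφ i)
      exact hdotc.mul contDiff_dot.continuous
    · intro v hv
      have hv' : |R| < ‖v‖ := by linarith
      have : (fun i => pd i φ v) = fun _ : Fin 3 => (0:ℝ) := funext fun i => hpdz v hv' i
      rw [this]
      simp [dotProduct]
  have hi2 : Integrable (fun v : V3 => φ v * (2 * (c ⬝ᵥ v))) volume := by
    apply integrable_of_vanish (R := R)
    · exact hφ.continuous.mul (continuous_const.mul (continuous_dot continuous_const continuous_id))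
    · intro v hv; rw [hR v hv]; ring
  rw [MeasureTheory.integral_add hi1 hi2] at hzero
  have hJ : ∫ v : V3, φ v * (2 * (c ⬝ᵥ v)) = 2 * (c ⬝ᵥ ∫ v : V3, φ v • v) := by
    have hint : Integrable (fun v : V3 => φ v • v) volume := integrable_smul_vec hφ.continuous hR
    rw [dot_integral c hint]
    have : (fun v : V3 => φ v * (2 * (c ⬝ᵥ v))) = fun v : V3 => 2 * (c ⬝ᵥ (φ v • v)) := by
      funext v
      simp [dotProduct, Fin.sum_univ_three]
      ring
    rw [this, MeasureTheory.integral_const_mul]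
  rw [hJ] at hzero
  linarith

/-- Poynting: integration by parts for curl over the periodic box. -/
lemma poynting_int {L : ℝ} (hL : 0 < L) {E B : V3 → V3}
    (hE : ContDiff ℝ (⊤ : ℕ∞) E) (hB : ContDiff ℝ (⊤ : ℕ∞) B)
    (hEp : ∀ (x : V3) (i : Fin 3), E (x + L • (Pi.single i (1:ℝ) : V3)) = E x)
    (hBp : ∀ (x : V3) (i : Fin 3), B (x + L • (Pi.single i (1:ℝ) : V3)) = B x) :
    ∫ x in box L, B x ⬝ᵥ curl E x = ∫ x in box L, E x ⬝ᵥ curl B x := by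
  have hEj : ∀ j : Fin 3, ContDiff ℝ (⊤ : ℕ∞) (fun y => E y j) := contDiff_pi.mp hE
  have hBj : ∀ j : Fin 3, ContDiff ℝ (⊤ : ℕ∞) (fun y => B y j) := contDiff_pi.mp hB
  have hU : ∀ i : Fin 3, ContDiff ℝ (⊤ : ℕ∞) (fun y => crossProduct (E y) (B y) i) := by
    intro i
    fin_cases i <;>
      · simp only [cross_apply, Matrix.cons_val_zero, Matrix.cons_val_one, Matrix.head_cons,
          Matrix.cons_val_two, Matrix.tail_cons, Fin.isValue]
        exact ((hEj _).mul (hBj _)).sub ((hEj _).mul (hBj _))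
  have hper : ∀ (i : Fin 3) (x : V3),
      crossProduct (E (x + L • (Pi.single i (1:ℝ) : V3))) (B (x + L • (Pi.single i (1:ℝ) : V3))) i
        = crossProduct (E x) (B x) i := by
    intro i x; rw [hEp, hBp]
  have h := div_periodic_zero hL (fun i y => crossProduct (E y) (B y) i) hU hper
  have hkey : (fun x => ∑ i : Fin 3, pd i (fun y => crossProduct (E y) (B y) i) x)
      = fun x => B x ⬝ᵥ curl E x - E x ⬝ᵥ curl B x :=
    funext fun x => poynting_pointwise
      (fun j => (hEj j).differentiable (by simp)) (fun j => (hBj j).differentiable (by simp)) x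
  rw [hkey] at h
  have hint1 : IntegrableOn (fun x => B x ⬝ᵥ curl E x) (box L) volume :=
    ((continuous_dot (continuous_pi fun j => (hBj j).continuous)
      (continuous_curl hE)).continuousOn).integrableOn_compact (isCompact_box L)
  have hint2 : IntegrableOn (fun x => E x ⬝ᵥ curl B x) (box L) volume :=
    ((continuous_dot (continuous_pi fun j => (hEj j).continuous)
      (continuous_curl hB)).continuousOn).integrableOn_compact (isCompact_box L)
  rw [MeasureTheory.integral_sub hint1 hint2] at h
  linarith

/-- Generic field-energy difference formula. -/
lemma field_side {L Δt : ℝ} (hΔt : 0 < Δt) {W1 Wn C : V3 → V3}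
    (hWn : Continuous Wn) (hW1 : Continuous W1) (hC : Continuous C)
    (hrel : ∀ x : V3, Δt⁻¹ • (W1 x - Wn x) = C x) :
    fieldE L W1 - fieldE L Wn
      = 2 * Δt * ∫ x in box L, ((2:ℝ)⁻¹ • (Wn x + W1 x)) ⬝ᵥ C x := by
  have hint1 : IntegrableOn (fun x => W1 x ⬝ᵥ W1 x) (box L) volume :=
    ((continuous_dot hW1 hW1).continuousOn).integrableOn_compact (isCompact_box L)
  have hint2 : IntegrableOn (fun x => Wn x ⬝ᵥ Wn x) (box L) volume :=
    ((continuous_dot hWn hWn).continuousOn).integrableOn_compact (isCompact_box L)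
  rw [fieldE, fieldE, ← MeasureTheory.integral_sub hint1 hint2, ← MeasureTheory.integral_const_mul]
  congr 1
  funext x
  have hc : ∀ i : Fin 3, W1 x i - Wn x i = Δt * C x i := by
    intro i
    have := congrFun (hrel x) i
    simp only [Pi.smul_apply, Pi.sub_apply, smul_eq_mul] at this
    field_simp at this
    linarith
  have h0 := hc 0; have h1 := hc 1; have h2 := hc 2
  simp only [dotProduct, Fin.sum_univ_three, Pi.smul_apply, Pi.add_apply, smul_eq_mul]
  linear_combination (Wn x 0 + W1 x 0) * h0 + (Wn x 1 + W1 x 1) * h1 + (Wn x 2 + W1 x 2) * h2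

end bigsteps

section kinside

lemma continuous_cross_apply {X : Type*} [TopologicalSpace X] {a b : X → V3}
    (ha : Continuous a) (hb : Continuous b) (i : Fin 3) :
    Continuous fun x => crossProduct (a x) (b x) i := by
  fin_cases i <;>
    · simp only [cross_apply, Matrix.cons_val_zero, Matrix.cons_val_one, Matrix.head_cons,
        Matrix.cons_val_two, Matrix.tail_cons, Fin.isValue]
      exact (((continuous_apply _).comp ha).mul ((continuous_apply _).comp hb)).sub
        (((continuous_apply _).comp ha).mul ((continuous_apply _).comp hb))

lemma kin_side {L Δt : ℝ} (hL : 0 < L) (hΔt : 0 < Δt) {f0 fh f1 : V3 → V3 → ℝ} {Em Bm : V3 → V3}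
    (hf0 : IsPhase L f0) (hfh : IsPhase L fh) (hf1 : IsPhase L f1)
    (hEm : ContDiff ℝ (⊤ : ℕ∞) Em) (hBm : ContDiff ℝ (⊤ : ℕ∞) Bm)
    (hV : ∀ x v : V3, (f1 x v - f0 x v) / Δt + v ⬝ᵥ gradX fh x v
        + (Em x + crossProduct v (Bm x)) ⬝ᵥ gradV fh x v = 0) :
    kinE L f1 - kinE L f0 = 2 * Δt * ∫ x in box L, Em x ⬝ᵥ Jcur fh x := by
  classical
  obtain ⟨Ra, hRa⟩ := hf0.2.2
  obtain ⟨Rb, hRb⟩ := hfh.2.2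
  obtain ⟨Rc, hRc⟩ := hf1.2.2
  set R0 : ℝ := |Ra| + |Rb| + |Rc| + 1 with hR0def
  have habsRa := abs_nonneg Ra; have habsRb := abs_nonneg Rb; have habsRc := abs_nonneg Rc
  have hRa' : ∀ x v : V3, R0 ≤ ‖v‖ → f0 x v = 0 := fun x v h =>
    hRa x v (le_trans (le_trans (le_abs_self Ra) (by linarith)) h)
  have hRb' : ∀ x v : V3, R0 ≤ ‖v‖ → fh x v = 0 := fun x v h =>
    hRb x v (le_trans (le_trans (le_abs_self Rb) (by linarith)) h)
  have hRc' : ∀ x v : V3, R0 ≤ ‖v‖ → f1 x v = 0 := fun x v h =>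
    hRc x v (le_trans (le_trans (le_abs_self Rc) (by linarith)) h)
  have hRblt : ∀ v : V3, R0 ≤ ‖v‖ → Rb < ‖v‖ := fun v h =>
    lt_of_le_of_lt (le_abs_self Rb) (lt_of_lt_of_le (by linarith) h)
  set K : Set V3 := Metric.closedBall (0:V3) R0 with hKdef
  have hK : IsCompact K := isCompact_closedBall _ _
  have hKm : MeasurableSet K := measurableSet_closedBall
  have houtK : ∀ v : V3, v ∉ K → R0 ≤ ‖v‖ := by
    intro v hv
    simp only [hKdef, Metric.mem_closedBall, dist_zero_right, not_le] at hv
    exact hv.le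
  -- joint continuity facts
  have hcf : ∀ {f : V3 → V3 → ℝ}, IsPhase L f →
      Continuous fun p : V3 × V3 => f p.1 p.2 * (p.2 ⬝ᵥ p.2) := fun hf =>
    (hf.1.continuous).mul (contDiff_dot.continuous.comp continuous_snd)
  have hA_jc : Continuous fun p : V3 × V3 => (p.2 ⬝ᵥ gradX fh p.1 p.2) * (p.2 ⬝ᵥ p.2) := by
    apply Continuous.mul ?_ (contDiff_dot.continuous.comp continuous_snd)
    exact continuous_finset_sum _ fun i _ =>
      (((continuous_apply i).comp continuous_snd).mul (continuous_gradX hfh.1 i))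
  have hB_jc : Continuous fun p : V3 × V3 =>
      ((Em p.1 + crossProduct p.2 (Bm p.1)) ⬝ᵥ gradV fh p.1 p.2) * (p.2 ⬝ᵥ p.2) := by
    apply Continuous.mul ?_ (contDiff_dot.continuous.comp continuous_snd)
    apply continuous_finset_sum
    intro i _
    apply Continuous.mul ?_ (continuous_gradV hfh.1 i)
    have : (fun p : V3 × V3 => (Em p.1 + crossProduct p.2 (Bm p.1)) i)
        = fun p : V3 × V3 => Em p.1 i + crossProduct p.2 (Bm p.1) i := rfl
    rw [this]
    exact (((continuous_apply i).comp (hEm.continuous.comp continuous_fst))).add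
      (continuous_cross_apply continuous_snd (hBm.continuous.comp continuous_fst) i)
  -- kinE over K
  have hkin : ∀ {f : V3 → V3 → ℝ}, IsPhase L f → (∀ x v : V3, R0 ≤ ‖v‖ → f x v = 0) →
      kinE L f = ∫ x in box L, ∫ v in K, f x v * (v ⬝ᵥ v) := by
    intro f hf hs
    have : (fun x => ∫ v : V3, f x v * (v ⬝ᵥ v))
        = fun x => ∫ v in K, f x v * (v ⬝ᵥ v) := by
      funext x
      exact (MeasureTheory.setIntegral_eq_integral_of_forall_compl_eq_zero
        (fun v hv => by rw [hs x v (houtK v hv)]; ring)).symm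
    rw [kinE, this]
  have hIf1 : IntegrableOn (fun x => ∫ v in K, f1 x v * (v ⬝ᵥ v)) (box L) volume :=
    ((cont_param (hcf hf1) hK hKm).continuousOn).integrableOn_compact (isCompact_box L)
  have hIf0 : IntegrableOn (fun x => ∫ v in K, f0 x v * (v ⬝ᵥ v)) (box L) volume :=
    ((cont_param (hcf hf0) hK hKm).continuousOn).integrableOn_compact (isCompact_box L)
  have hdiff : kinE L f1 - kinE L f0
      = ∫ x in box L, ((∫ v in K, f1 x v * (v ⬝ᵥ v)) - (∫ v in K, f0 x v * (v ⬝ᵥ v))) := by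
    rw [hkin hf1 hRc', hkin hf0 hRa', ← MeasureTheory.integral_sub hIf1 hIf0]
  -- pointwise split
  have hpt : ∀ x : V3, (∫ v in K, f1 x v * (v ⬝ᵥ v)) - (∫ v in K, f0 x v * (v ⬝ᵥ v))
      = (-Δt) * (∫ v in K, (v ⬝ᵥ gradX fh x v) * (v ⬝ᵥ v))
        + (-Δt) * (∫ v in K, ((Em x + crossProduct v (Bm x)) ⬝ᵥ gradV fh x v) * (v ⬝ᵥ v)) := by
    intro x
    have ia : IntegrableOn (fun v => (v ⬝ᵥ gradX fh x v) * (v ⬝ᵥ v)) K volume :=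
      (((hA_jc.comp (Continuous.prodMk_right x)).continuousOn).integrableOn_compact hK)
    have ib : IntegrableOn
        (fun v => ((Em x + crossProduct v (Bm x)) ⬝ᵥ gradV fh x v) * (v ⬝ᵥ v)) K volume :=
      (((hB_jc.comp (Continuous.prodMk_right x)).continuousOn).integrableOn_compact hK)
    have if1 : IntegrableOn (fun v => f1 x v * (v ⬝ᵥ v)) K volume :=
      ((((hcf hf1).comp (Continuous.prodMk_right x)).continuousOn).integrableOn_compact hK)
    have if0 : IntegrableOn (fun v => f0 x v * (v ⬝ᵥ v)) K volume :=
      ((((hcf hf0).comp (Continuous.prodMk_right x)).continuousOn).integrableOn_compact hK)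
    rw [← MeasureTheory.integral_const_mul, ← MeasureTheory.integral_const_mul,
      ← MeasureTheory.integral_sub if1 if0,
      ← MeasureTheory.integral_add (ia.const_mul (-Δt)) (ib.const_mul (-Δt))]
    congr 1
    funext v
    have h := hV x v
    set a := v ⬝ᵥ gradX fh x v with ha
    set cc := (Em x + crossProduct v (Bm x)) ⬝ᵥ gradV fh x v with hcc
    have hfd : f1 x v - f0 x v = -Δt * (a + cc) := by
      have hne : Δt ≠ 0 := ne_of_gt hΔt
      field_simp at h
      linarith
    linear_combination (v ⬝ᵥ v) * hfd
  -- A term vanishes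
  have hA0 : (∫ x in box L, ∫ v in K, (v ⬝ᵥ gradX fh x v) * (v ⬝ᵥ v)) = 0 := by
    rw [swap_box_K hA_jc hK]
    have : (fun v => ∫ x in box L, (v ⬝ᵥ gradX fh x v) * (v ⬝ᵥ v)) = fun _ : V3 => (0:ℝ) :=
      funext fun v => xflux hL hfh v
    rw [this]
    simp
  -- B term
  have hBeq : ∀ x : V3, (∫ v in K, ((Em x + crossProduct v (Bm x)) ⬝ᵥ gradV fh x v) * (v ⬝ᵥ v))
      = -2 * (Em x ⬝ᵥ Jcur fh x) := by
    intro x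
    have h1 : (∫ v in K, ((Em x + crossProduct v (Bm x)) ⬝ᵥ gradV fh x v) * (v ⬝ᵥ v))
        = ∫ v : V3, ((Em x + crossProduct v (Bm x)) ⬝ᵥ gradV fh x v) * (v ⬝ᵥ v) := by
      apply MeasureTheory.setIntegral_eq_integral_of_forall_compl_eq_zero
      intro v hv
      have hg : gradV fh x v = (fun _ : Fin 3 => (0:ℝ)) :=
        funext fun i => gradV_zero_of_zero (fun w hw => hRb x w hw) (hRblt v (houtK v hv)) i
      rw [hg]
      simp [dotProduct]
    rw [h1]
    exact vflux (Em x) (Bm x) (contDiff_psnd hfh.1 x) (fun w hw => hRb x w hw)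
  -- assemble
  have hAi : IntegrableOn (fun x => ∫ v in K, (v ⬝ᵥ gradX fh x v) * (v ⬝ᵥ v)) (box L) volume :=
    ((cont_param hA_jc hK hKm).continuousOn).integrableOn_compact (isCompact_box L)
  have hBi : IntegrableOn
      (fun x => ∫ v in K, ((Em x + crossProduct v (Bm x)) ⬝ᵥ gradV fh x v) * (v ⬝ᵥ v))
      (box L) volume :=
    ((cont_param hB_jc hK hKm).continuousOn).integrableOn_compact (isCompact_box L)
  have hsplit : kinE L f1 - kinE L f0
      = (-Δt) * (∫ x in box L, ∫ v in K, (v ⬝ᵥ gradX fh x v) * (v ⬝ᵥ v))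
        + (-Δt) * (∫ x in box L, ∫ v in K,
            ((Em x + crossProduct v (Bm x)) ⬝ᵥ gradV fh x v) * (v ⬝ᵥ v)) := by
    rw [hdiff]
    have : (fun x => (∫ v in K, f1 x v * (v ⬝ᵥ v)) - (∫ v in K, f0 x v * (v ⬝ᵥ v)))
        = fun x => (-Δt) * (∫ v in K, (v ⬝ᵥ gradX fh x v) * (v ⬝ᵥ v))
          + (-Δt) * (∫ v in K, ((Em x + crossProduct v (Bm x)) ⬝ᵥ gradV fh x v) * (v ⬝ᵥ v)) :=
      funext hpt
    rw [this, MeasureTheory.integral_add ((hAi.const_mul (-Δt))) ((hBi.const_mul (-Δt))),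
      MeasureTheory.integral_const_mul, MeasureTheory.integral_const_mul]
  have hBfin : (∫ x in box L, ∫ v in K,
      ((Em x + crossProduct v (Bm x)) ⬝ᵥ gradV fh x v) * (v ⬝ᵥ v))
      = -2 * ∫ x in box L, Em x ⬝ᵥ Jcur fh x := by
    have : (fun x => ∫ v in K, ((Em x + crossProduct v (Bm x)) ⬝ᵥ gradV fh x v) * (v ⬝ᵥ v))
        = fun x => -2 * (Em x ⬝ᵥ Jcur fh x) := funext hBeq
    rw [this, MeasureTheory.integral_const_mul]
  rw [hsplit, hA0, hBfin]
  ring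

end kinside

/-- Energy conservation of Scheme-2 (Theorem 2.1, case Scheme-2). -/
theorem scheme2_energy_conservation
    (L Δt : ℝ) (hL : 0 < L) (hΔt : 0 < Δt)
    (f0 fh f1 : V3 → V3 → ℝ) (En E1 Bn B1 : V3 → V3)
    (hf0 : IsPhase L f0) (hfh : IsPhase L fh) (hf1 : IsPhase L f1)
    (hEn : IsSpatialVF L En) (hE1 : IsSpatialVF L E1)
    (hBn : IsSpatialVF L Bn) (hB1 : IsSpatialVF L B1)
    (hVlasovHalf : ∀ x v : V3,
      (fh x v - f0 x v) / (Δt / 2) + v ⬝ᵥ gradX f0 x v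
        + (En x + crossProduct v (Bn x)) ⬝ᵥ gradV f0 x v = 0)
    (hFaraday : ∀ x : V3,
      Δt⁻¹ • (B1 x - Bn x) = - curl (fun y => (2:ℝ)⁻¹ • (En y + E1 y)) x)
    (hAmpere : ∀ x : V3,
      Δt⁻¹ • (E1 x - En x)
        = curl (fun y => (2:ℝ)⁻¹ • (Bn y + B1 y)) x - Jcur fh x)
    (hVlasovFull : ∀ x v : V3,
      (f1 x v - f0 x v) / Δt + v ⬝ᵥ gradX fh x v
        + ((2:ℝ)⁻¹ • (En x + E1 x) + crossProduct v ((2:ℝ)⁻¹ • (Bn x + B1 x)))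
            ⬝ᵥ gradV fh x v = 0) :
    kinE L f1 + (fieldE L E1 + fieldE L B1)
      = kinE L f0 + (fieldE L En + fieldE L Bn) := by
  classical
  set Em : V3 → V3 := fun y => (2:ℝ)⁻¹ • (En y + E1 y) with hEmdef
  set Bm : V3 → V3 := fun y => (2:ℝ)⁻¹ • (Bn y + B1 y) with hBmdef
  have hEms : ContDiff ℝ (⊤ : ℕ∞) Em := (hEn.1.add hE1.1).const_smul (2:ℝ)⁻¹
  have hBms : ContDiff ℝ (⊤ : ℕ∞) Bm := (hBn.1.add hB1.1).const_smul (2:ℝ)⁻¹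
  have hEmp : ∀ (x : V3) (i : Fin 3), Em (x + L • (Pi.single i (1:ℝ) : V3)) = Em x := by
    intro x i; simp only [hEmdef]; rw [hEn.2 x i, hE1.2 x i]
  have hBmp : ∀ (x : V3) (i : Fin 3), Bm (x + L • (Pi.single i (1:ℝ) : V3)) = Bm x := by
    intro x i; simp only [hBmdef]; rw [hBn.2 x i, hB1.2 x i]
  -- Continuity of the current density
  obtain ⟨Rb, hRb⟩ := hfh.2.2
  have hRb' : ∀ x v : V3, |Rb| + 1 ≤ ‖v‖ → fh x v = 0 := fun x v h =>
    hRb x v (le_trans (le_trans (le_abs_self Rb) (by linarith)) h)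
  set K : Set V3 := Metric.closedBall (0:V3) (|Rb| + 1) with hKdef
  have hK : IsCompact K := isCompact_closedBall _ _
  have hKm : MeasurableSet K := measurableSet_closedBall
  have houtK : ∀ v : V3, v ∉ K → |Rb| + 1 ≤ ‖v‖ := by
    intro v hv
    simp only [hKdef, Metric.mem_closedBall, dist_zero_right, not_le] at hv
    exact hv.le
  have hJcomp : ∀ (x : V3) (i : Fin 3), Jcur fh x i = ∫ v in K, fh x v * v i := by
    intro x i
    have hint : Integrable (fun v : V3 => fh x v • v) volume :=
      integrable_smul_vec ((contDiff_psnd hfh.1 x).continuous) (hRb x)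
    have h1 : Jcur fh x i = ∫ v : V3, fh x v * v i :=
      ((ContinuousLinearMap.proj i : V3 →L[ℝ] ℝ).integral_comp_comm hint).symm
    rw [h1]
    exact (MeasureTheory.setIntegral_eq_integral_of_forall_compl_eq_zero
      (fun v hv => by rw [hRb' x v (houtK v hv)]; ring)).symm
  have hJc : Continuous fun x => Jcur fh x := by
    apply continuous_pi
    intro i
    have : (fun x => Jcur fh x i) = fun x => ∫ v in K, fh x v * v i :=
      funext fun x => hJcomp x i
    rw [this]
    exact cont_param ((hfh.1.continuous).mul ((continuous_apply i).comp continuous_snd)) hK hKm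
  -- kinetic side
  have hkin : kinE L f1 - kinE L f0 = 2 * Δt * ∫ x in box L, Em x ⬝ᵥ Jcur fh x :=
    kin_side hL hΔt hf0 hfh hf1 hEms hBms (fun x v => hVlasovFull x v)
  -- field sides
  have hfe := field_side (L := L) (C := fun x => curl Bm x - Jcur fh x) hΔt (hEn.1.continuous) (hE1.1.continuous)
    ((continuous_curl hBms).sub hJc) (fun x => hAmpere x)
  have hfb := field_side (L := L) (C := fun x => -curl Em x) hΔt (hBn.1.continuous) (hB1.1.continuous)
    ((continuous_curl hEms).neg) (fun x => hFaraday x)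
  -- split the Ampère term
  have hIcurlB : IntegrableOn (fun x => Em x ⬝ᵥ curl Bm x) (box L) volume :=
    ((continuous_dot hEms.continuous (continuous_curl hBms)).continuousOn).integrableOn_compact
      (isCompact_box L)
  have hIJ : IntegrableOn (fun x => Em x ⬝ᵥ Jcur fh x) (box L) volume :=
    ((continuous_dot hEms.continuous hJc).continuousOn).integrableOn_compact (isCompact_box L)
  have hfe' : fieldE L E1 - fieldE L En
      = 2 * Δt * (∫ x in box L, Em x ⬝ᵥ curl Bm x)
        - 2 * Δt * (∫ x in box L, Em x ⬝ᵥ Jcur fh x) := by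
    rw [hfe]
    have : (fun x => ((2:ℝ)⁻¹ • (En x + E1 x)) ⬝ᵥ (curl Bm x - Jcur fh x))
        = fun x => Em x ⬝ᵥ curl Bm x - Em x ⬝ᵥ Jcur fh x := by
      funext x
      show Em x ⬝ᵥ (curl Bm x - Jcur fh x) = _
      simp [dotProduct, Fin.sum_univ_three]
      ring
    rw [this, MeasureTheory.integral_sub hIcurlB hIJ]
    ring
  have hfb' : fieldE L B1 - fieldE L Bn
      = -(2 * Δt) * (∫ x in box L, Bm x ⬝ᵥ curl Em x) := by
    rw [hfb]
    have : (fun x => ((2:ℝ)⁻¹ • (Bn x + B1 x)) ⬝ᵥ (-curl Em x))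
        = fun x => -(Bm x ⬝ᵥ curl Em x) := by
      funext x
      show Bm x ⬝ᵥ (-curl Em x) = _
      simp [dotProduct, Fin.sum_univ_three]
    rw [this, MeasureTheory.integral_neg]
    ring
  have hpoy : (∫ x in box L, Bm x ⬝ᵥ curl Em x) = ∫ x in box L, Em x ⬝ᵥ curl Bm x :=
    poynting_int hL hEms hBms hEmp hBmp
  have hpoy2 : 2 * Δt * (∫ x in box L, Bm x ⬝ᵥ curl Em x)
      = 2 * Δt * (∫ x in box L, Em x ⬝ᵥ curl Bm x) := by rw [hpoy]
  linarith
end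
end

section
/- The implicit midpoint discretization of split equation (b) (Scheme-b, equation (2.7)) conserves the sum of kinetic and electric energies. Suppose f^n, f^{n+1} are phase-space functions and E^n, E^{n+1} are spatial vector fields satisfying (f^{n+1} − f^n)/Δt + ((E^n + E^{n+1})/2)·∇_v ((f^n + f^{n+1})/2) = 0 and (E^{n+1} − E^n)/Δt = −(J^n + J^{n+1})/2, where J^m(x) = ∫_Ωv f^m(x,v) v dv for m = n, n+1. Then ∫_Ωx ∫_Ωv f^{n+1} |v|² dv dx + ∫_Ωx |E^{n+1}|² dx = ∫_Ωx ∫_Ωv f^n |v|² dv dx + ∫_Ωx |E^n|² dx. -/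
open MeasureTheory Matrix

noncomputable section

/-! ### Auxiliary lemmas -/

/-- The continuous linear map `w ↦ c ⬝ᵥ w`. -/
def dotCLM (c : V3) : V3 →L[ℝ] ℝ := ∑ i, c i • (ContinuousLinearMap.proj i : V3 →L[ℝ] ℝ)

lemma dotCLM_apply (c w : V3) : dotCLM c w = c ⬝ᵥ w := by
  simp [dotCLM, dotProduct]

lemma hasCompactSupport_of_vanish {φ : V3 → ℝ} {R : ℝ} (h : ∀ v : V3, R ≤ ‖v‖ → φ v = 0) :
    HasCompactSupport φ :=
  HasCompactSupport.intro (isCompact_closedBall (0:V3) (max R 0)) (fun v hv => by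
    apply h v
    simp only [Metric.mem_closedBall, dist_zero_right, not_le] at hv
    exact le_of_lt (lt_of_le_of_lt (le_max_left _ _) hv))

lemma continuous_quad : Continuous (fun w : V3 => w ⬝ᵥ w) :=
  continuous_finset_sum _ fun i _ => (continuous_apply i).mul (continuous_apply i)

lemma hasFDerivAt_quad (v : V3) :
    HasFDerivAt (fun w : V3 => w ⬝ᵥ w) (dotCLM ((2:ℝ) • v)) v := by
  have h : HasFDerivAt (fun w : V3 => ∑ i : Fin 3, w i * w i)
      (∑ i : Fin 3, (v i • (ContinuousLinearMap.proj i : V3 →L[ℝ] ℝ)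
        + v i • (ContinuousLinearMap.proj i : V3 →L[ℝ] ℝ))) v :=
    HasFDerivAt.fun_sum (fun i _ => (hasFDerivAt_apply i v).mul (hasFDerivAt_apply i v))
  convert h using 1
  · rfl
  · rfl
  ext w
  simp [dotCLM, Pi.smul_apply, smul_eq_mul, Finset.sum_add_distrib]
  rw [← Finset.sum_add_distrib]
  congr 1; ext i; ring

lemma fderiv_dot (φ : V3 → ℝ) (hφ : Differentiable ℝ φ) (v c : V3) :
    c ⬝ᵥ (fun i => fderiv ℝ φ v (Pi.single i 1)) = fderiv ℝ φ v c := by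
  have hc : c = ∑ i : Fin 3, c i • (Pi.single i 1 : V3) := by
    funext j
    simp [Finset.sum_apply, Pi.single_apply]
  conv_rhs => rw [hc]
  rw [map_sum]
  simp [dotProduct, smul_eq_mul]

/-- Integration by parts in velocity space against `|v|²`. -/
lemma ibp (φ : V3 → ℝ) (hφ : ContDiff ℝ (⊤ : ℕ∞) φ) (hcs : HasCompactSupport φ) (c : V3) :
    ∫ v : V3, (c ⬝ᵥ (fun i => fderiv ℝ φ v (Pi.single i 1))) * (v ⬝ᵥ v)
      = - ∫ v : V3, φ v * (((2:ℝ) • v) ⬝ᵥ c) := by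
  have hφc : Continuous φ := hφ.continuous
  have hφd : Differentiable ℝ φ := hφ.differentiable (by simp)
  have hquadd : Differentiable ℝ (fun w : V3 => w ⬝ᵥ w) :=
    fun v => (hasFDerivAt_quad v).differentiableAt
  have hfd : ∀ v : V3, fderiv ℝ (fun w : V3 => w ⬝ᵥ w) v c = ((2:ℝ) • v) ⬝ᵥ c := fun v => by
    rw [(hasFDerivAt_quad v).fderiv, dotCLM_apply]
  have hdφc : Continuous (fun v => fderiv ℝ φ v c) :=
    (hφ.continuous_fderiv (by simp)).clm_apply continuous_const
  have hcs' : HasCompactSupport (fun v => fderiv ℝ φ v c) :=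
    (hcs.fderiv ℝ).comp_left (g := fun L : V3 →L[ℝ] ℝ => L c) rfl
  have h1 : Integrable (fun v : V3 => fderiv ℝ φ v c * (v ⬝ᵥ v)) volume :=
    ((hdφc.mul continuous_quad)).integrable_of_hasCompactSupport (hcs'.mul_right)
  have h2 : Integrable (fun v : V3 => φ v * fderiv ℝ (fun w : V3 => w ⬝ᵥ w) v c) volume := by
    refine ((hφc.mul ?_)).integrable_of_hasCompactSupport (hcs.mul_right)
    simp only [hfd]
    exact (continuous_id.const_smul (2:ℝ) : Continuous fun v : V3 => (2:ℝ) • v).dotProduct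
      (continuous_const : Continuous fun _ : V3 => c)
  have h3 : Integrable (fun v : V3 => φ v * (v ⬝ᵥ v)) volume :=
    (hφc.mul continuous_quad).integrable_of_hasCompactSupport (hcs.mul_right)
  have key := integral_mul_fderiv_eq_neg_fderiv_mul_of_integrable (μ := volume)
    h1 h2 h3 (fun x _ => hφd x) (fun x _ => hquadd x)
  simp only [hfd] at key
  simp only [fun v => fderiv_dot φ hφd v c]
  linarith [key]

lemma dot_Jcur (f : V3 → V3 → ℝ) (x c : V3)
    (hInt : Integrable (fun v : V3 => f x v • v) volume) :
    c ⬝ᵥ Jcur f x = ∫ v : V3, f x v * (v ⬝ᵥ c) := by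
  have h1 : c ⬝ᵥ Jcur f x = dotCLM c (∫ v : V3, f x v • v) := (dotCLM_apply _ _).symm
  rw [h1, ← ContinuousLinearMap.integral_comp_comm _ hInt]
  congr 1
  funext v
  rw [dotCLM_apply, dotProduct_smul, dotProduct_comm, smul_eq_mul]

/-- The implicit midpoint discretization of split equation (b) (Scheme-b, equation
(2.7)) conserves the sum of kinetic and electric energies. -/
theorem schemeB_energy_conservation
    (L Δt : ℝ) (hL : 0 < L) (hΔt : 0 < Δt)
    (f0 f1 : V3 → V3 → ℝ) (En E1 : V3 → V3)
    (hf0 : IsPhase L f0) (hf1 : IsPhase L f1)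
    (hEn : IsSpatialVF L En) (hE1 : IsSpatialVF L E1)
    (hVlasov : ∀ x v : V3,
      (f1 x v - f0 x v) / Δt
        + ((2:ℝ)⁻¹ • (En x + E1 x))
            ⬝ᵥ gradV (fun y w => (f0 y w + f1 y w) / 2) x v = 0)
    (hAmpere : ∀ x : V3,
      Δt⁻¹ • (E1 x - En x) = - ((2:ℝ)⁻¹ • (Jcur f0 x + Jcur f1 x))) :
    kinE L f1 + fieldE L E1 = kinE L f0 + fieldE L En := by
  obtain ⟨hf0s, hf0p, R0, hR0⟩ := hf0
  obtain ⟨hf1s, hf1p, R1, hR1⟩ := hf1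
  -- pointwise (in x) smoothness / support / integrability facts
  have hsm0 : ∀ x : V3, ContDiff ℝ (⊤ : ℕ∞) (fun w => f0 x w) := fun x =>
    hf0s.comp (f := fun w : V3 => (x, w)) (ContDiff.prodMk (contDiff_const (c := x)) contDiff_id)
  have hsm1 : ∀ x : V3, ContDiff ℝ (⊤ : ℕ∞) (fun w => f1 x w) := fun x =>
    hf1s.comp (f := fun w : V3 => (x, w)) (ContDiff.prodMk (contDiff_const (c := x)) contDiff_id)
  have hcs0 : ∀ x : V3, HasCompactSupport (fun w => f0 x w) := fun x =>
    hasCompactSupport_of_vanish (fun v hv => hR0 x v hv)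
  have hcs1 : ∀ x : V3, HasCompactSupport (fun w => f1 x w) := fun x =>
    hasCompactSupport_of_vanish (fun v hv => hR1 x v hv)
  have hI0q : ∀ x : V3, Integrable (fun v : V3 => f0 x v * (v ⬝ᵥ v)) volume := fun x =>
    ((hsm0 x).continuous.mul continuous_quad).integrable_of_hasCompactSupport
      ((hcs0 x).mul_right)
  have hI1q : ∀ x : V3, Integrable (fun v : V3 => f1 x v * (v ⬝ᵥ v)) volume := fun x =>
    ((hsm1 x).continuous.mul continuous_quad).integrable_of_hasCompactSupport
      ((hcs1 x).mul_right)
  have hI0J : ∀ x : V3, Integrable (fun v : V3 => f0 x v • v) volume := fun x =>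
    ((hsm0 x).continuous.smul continuous_id).integrable_of_hasCompactSupport
      ((hcs0 x).smul_right)
  have hI1J : ∀ x : V3, Integrable (fun v : V3 => f1 x v • v) volume := fun x =>
    ((hsm1 x).continuous.smul continuous_id).integrable_of_hasCompactSupport
      ((hcs1 x).smul_right)
  have hI0d : ∀ x c : V3, Integrable (fun v : V3 => f0 x v * (v ⬝ᵥ c)) volume := fun x c =>
    ((hsm0 x).continuous.mul (continuous_id.dotProduct
      continuous_const)).integrable_of_hasCompactSupport ((hcs0 x).mul_right)
  have hI1d : ∀ x c : V3, Integrable (fun v : V3 => f1 x v * (v ⬝ᵥ c)) volume := fun x c =>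
    ((hsm1 x).continuous.mul (continuous_id.dotProduct
      continuous_const)).integrable_of_hasCompactSupport ((hcs1 x).mul_right)
  -- the pointwise (in x) energy identity
  have hpt : ∀ x : V3,
      (∫ v : V3, f1 x v * (v ⬝ᵥ v)) + E1 x ⬝ᵥ E1 x
        = (∫ v : V3, f0 x v * (v ⬝ᵥ v)) + En x ⬝ᵥ En x := by
    intro x
    set c : V3 := (2:ℝ)⁻¹ • (En x + E1 x) with hc
    set φm : V3 → ℝ := fun w => (f0 x w + f1 x w) / 2 with hφm
    have hφmsm : ContDiff ℝ (⊤ : ℕ∞) φm := ((hsm0 x).add (hsm1 x)).div_const 2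
    have hφmcs : HasCompactSupport φm :=
      hasCompactSupport_of_vanish (R := max R0 R1) (fun v hv => by
        simp [φm, hR0 x v (le_trans (le_max_left _ _) hv),
          hR1 x v (le_trans (le_max_right _ _) hv)])
    have hV : ∀ v : V3, f1 x v - f0 x v
        = -(Δt * (c ⬝ᵥ (fun i => fderiv ℝ φm v (Pi.single i 1)))) := by
      intro v
      have h := hVlasov x v
      have hg : gradV (fun y w => (f0 y w + f1 y w) / 2) x v
          = fun i => fderiv ℝ φm v (Pi.single i 1) := rfl
      rw [hg, ← hc] at h
      have h2 : (f1 x v - f0 x v) / Δt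
          = -(c ⬝ᵥ (fun i => fderiv ℝ φm v (Pi.single i 1))) := by linarith
      rw [div_eq_iff (ne_of_gt hΔt)] at h2
      linarith
    -- kinetic energy difference
    have hK : (∫ v : V3, f1 x v * (v ⬝ᵥ v)) - (∫ v : V3, f0 x v * (v ⬝ᵥ v))
        = Δt * (c ⬝ᵥ (Jcur f0 x + Jcur f1 x)) := by
      rw [← integral_sub (hI1q x) (hI0q x)]
      have h1 : ∀ v : V3, f1 x v * (v ⬝ᵥ v) - f0 x v * (v ⬝ᵥ v)
          = -Δt * ((c ⬝ᵥ (fun i => fderiv ℝ φm v (Pi.single i 1))) * (v ⬝ᵥ v)) := by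
        intro v
        rw [← sub_mul, hV v]
        ring
      simp only [h1]
      rw [integral_const_mul, ibp φm hφmsm hφmcs c]
      have h2 : ∀ v : V3, φm v * (((2:ℝ) • v) ⬝ᵥ c)
          = f0 x v * (v ⬝ᵥ c) + f1 x v * (v ⬝ᵥ c) := by
        intro v
        simp only [φm, smul_dotProduct, smul_eq_mul]
        ring
      simp only [h2]
      rw [integral_add (hI0d x c) (hI1d x c), dotProduct_add,
        dot_Jcur f0 x c (hI0J x), dot_Jcur f1 x c (hI1J x)]
      ring
    -- field energy difference
    have hE : E1 x ⬝ᵥ E1 x - En x ⬝ᵥ En x = -(Δt * (c ⬝ᵥ (Jcur f0 x + Jcur f1 x))) := by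
      have hD : E1 x - En x = Δt • (-((2:ℝ)⁻¹ • (Jcur f0 x + Jcur f1 x))) := by
        rw [← hAmpere x, smul_smul, mul_inv_cancel₀ (ne_of_gt hΔt), one_smul]
      have hid : (E1 x - En x) ⬝ᵥ (E1 x + En x) = E1 x ⬝ᵥ E1 x - En x ⬝ᵥ En x := by
        rw [sub_dotProduct, dotProduct_add, dotProduct_add, dotProduct_comm (En x) (E1 x)]
        ring
      rw [← hid, hD]
      have hcomm : (Jcur f0 x + Jcur f1 x) ⬝ᵥ (E1 x + En x)
          = (En x + E1 x) ⬝ᵥ (Jcur f0 x + Jcur f1 x) := by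
        rw [dotProduct_comm, add_comm (E1 x)]
      rw [smul_dotProduct, neg_dotProduct, smul_dotProduct, hcomm, hc, smul_dotProduct]
      simp only [smul_eq_mul]
      ring
    linarith
  -- assemble the global identity
  have hKid : ∀ x : V3, (∫ v : V3, f1 x v * (v ⬝ᵥ v))
      = (∫ v : V3, f0 x v * (v ⬝ᵥ v)) + (En x ⬝ᵥ En x - E1 x ⬝ᵥ E1 x) := fun x => by
    linarith [hpt x]
  have hboxc : IsCompact (box L) := isCompact_Icc
  have hboxm : MeasurableSet (box L) := measurableSet_Icc
  have hen : IntegrableOn (fun x => En x ⬝ᵥ En x) (box L) volume :=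
    ((hEn.1.continuous.dotProduct hEn.1.continuous).continuousOn).integrableOn_compact
      hboxc
  have he1 : IntegrableOn (fun x => E1 x ⬝ᵥ E1 x) (box L) volume :=
    ((hE1.1.continuous.dotProduct hE1.1.continuous).continuousOn).integrableOn_compact
      hboxc
  -- integrability of the kinetic-energy density of f0 on the box
  have hK0 : IntegrableOn (fun x => ∫ v : V3, f0 x v * (v ⬝ᵥ v)) (box L) volume := by
    have hcont : Continuous (fun p : V3 × V3 => f0 p.1 p.2 * (p.2 ⬝ᵥ p.2)) :=
      hf0s.continuous.mul (continuous_quad.comp continuous_snd)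
    have hmeas : StronglyMeasurable (fun x => ∫ v : V3, f0 x v * (v ⬝ᵥ v)) :=
      StronglyMeasurable.integral_prod_right (f := fun x v : V3 => f0 x v * (v ⬝ᵥ v))
        hcont.stronglyMeasurable
    set s : Set V3 := Metric.closedBall (0:V3) (max R0 0) with hs
    obtain ⟨C, hC⟩ := (hboxc.prod (isCompact_closedBall (0:V3)
      (max R0 0))).exists_bound_of_continuousOn hcont.continuousOn
    have hbound : ∀ x ∈ box L, ‖∫ v : V3, f0 x v * (v ⬝ᵥ v)‖ ≤ C * (volume s).toReal := by
      intro x hx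
      rw [← setIntegral_eq_integral_of_forall_compl_eq_zero (s := s)
        (fun v hv => by
          have : R0 ≤ ‖v‖ := by
            simp only [hs, Metric.mem_closedBall, dist_zero_right, not_le] at hv
            exact le_of_lt (lt_of_le_of_lt (le_max_left _ _) hv)
          rw [hR0 x v this, zero_mul])]
      exact norm_setIntegral_le_of_norm_le_const
        (measure_closedBall_lt_top)
        (fun v hv => hC (x, v) ⟨hx, hv⟩)
    haveI : Fact (volume (box L) < ⊤) := ⟨hboxc.measure_lt_top⟩
    refine ⟨hmeas.aestronglyMeasurable, ?_⟩
    exact HasFiniteIntegral.of_bounded ((ae_restrict_iff' hboxm).mpr (ae_of_all _ hbound))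
  have hsum : kinE L f1 = kinE L f0 + (fieldE L En - fieldE L E1) := by
    unfold kinE fieldE
    simp only [hKid]
    have hsub : IntegrableOn (fun x => En x ⬝ᵥ En x - E1 x ⬝ᵥ E1 x) (box L) volume :=
      hen.sub he1
    rw [integral_add hK0 hsub, integral_sub hen he1]
  have := hsum
  unfold kinE fieldE at this ⊢
  linarith
end
end
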